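/- arXiv:2101.10489 — 4 statements merged into one kernel-verified Lean document; each statement's English description precedes it below -/
import Mathlib

section
/- Let S : A ⥤ C and T : B ⥤ C be functors, let J be a small category, suppose A and B admit limits of all J-shaped diagrams and both S and T preserve limits of J-shaped diagrams, and let D : J ⥤ S↓T be a diagram whose value at every object of J lies in the restricted comma subcategory (i.e., has invertible structure morphism). Then the limit of D in S↓T exists and its structure morphism S(lim P_A D) ⟶ T(lim P_B D) is an isomorphism; in particular, the restricted comma category (S↓T)_iso admits limits of J-shaped diagrams. -/
/-!
Build the limit of `D` componentwise: its `A`-part is `lim (D ⋙ P_A)`, its `B`-part is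
`lim (D ⋙ P_B)`, and its structure morphism is the comparison map from `S (lim (D ⋙ P_A))`
to `T (lim (D ⋙ P_B)) ≅ lim (D ⋙ P_B ⋙ T)`. Since `S` preserves the first limit, the source
is the limit of `D ⋙ P_A ⋙ S`, and the structure morphisms of the `D j` form a natural
isomorphism `D ⋙ P_A ⋙ S ≅ D ⋙ P_B ⋙ T`; hence the comparison map is an isomorphism. Any other
limit cone of `D` is isomorphic to this one, and invertibility of the structure morphism is
invariant under isomorphism in `S↓T`.
-/

open CategoryTheory CategoryTheory.Limits

namespace CategoryTheory.Comma

variable {A B C : Type*} [Category A] [Category B] [Category C] {S : A ⥤ C} {T : B ⥤ C}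

lemma isIso_hom_of_iso {X Y : Comma S T} (e : X ≅ Y) [IsIso X.hom] : IsIso Y.hom := by
  rw [← inv_left_hom_right e.hom]
  infer_instance

variable {J : Type*} [Category J] (F : J ⥤ Comma S T)

noncomputable def isLimitLimitAuxiliaryCone [PreservesLimit (F ⋙ fst S T) S]
    (hF : ∀ j, IsIso (F.obj j).hom) {c₁ : Cone (F ⋙ fst S T)} (t₁ : IsLimit c₁) :
    IsLimit (limitAuxiliaryCone F c₁) :=
  have : ∀ j, IsIso ((Functor.whiskerLeft F (natTrans S T)).app j) := hF
  have : IsIso (Functor.whiskerLeft F (natTrans S T)) := NatIso.isIso_of_isIso_app _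
  (IsLimit.postcomposeHomEquiv (asIso (Functor.whiskerLeft F (natTrans S T))) _).symm
    (isLimitOfPreserves S t₁)

lemma isIso_coneOfPreserves_pt_hom [PreservesLimit (F ⋙ fst S T) S]
    [PreservesLimit (F ⋙ snd S T) T] (hF : ∀ j, IsIso (F.obj j).hom)
    {c₁ : Cone (F ⋙ fst S T)} (t₁ : IsLimit c₁) {c₂ : Cone (F ⋙ snd S T)} (t₂ : IsLimit c₂) :
    IsIso (coneOfPreserves F c₁ t₂).pt.hom :=
  (isLimitOfPreserves T t₂).nonempty_isLimit_iff_isIso_lift.1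
    ⟨isLimitLimitAuxiliaryCone F hF t₁⟩

variable {F}

lemma isIso_hom_of_isLimit [HasLimit (F ⋙ fst S T)] [HasLimit (F ⋙ snd S T)]
    [PreservesLimit (F ⋙ fst S T) S] [PreservesLimit (F ⋙ snd S T) T]
    (hF : ∀ j, IsIso (F.obj j).hom) {c : Cone F} (hc : IsLimit c) : IsIso c.pt.hom :=
  have := isIso_coneOfPreserves_pt_hom F hF (limit.isLimit _) (limit.isLimit _)
  isIso_hom_of_iso <|
    (coneOfPreservesIsLimit F (limit.isLimit _) (limit.isLimit _)).conePointUniqueUpToIso hc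

instance isClosedUnderLimitsOfShape_isIso_hom [HasLimitsOfShape J A] [HasLimitsOfShape J B]
    [PreservesLimitsOfShape J S] [PreservesLimitsOfShape J T] :
    ObjectProperty.IsClosedUnderLimitsOfShape (fun X : Comma S T => IsIso X.hom) J where
  limitsOfShape_le _ := fun ⟨h⟩ => isIso_hom_of_isLimit h.prop_diag_obj h.isLimit

end CategoryTheory.Comma

/-- Suppose `A` and `B` admit limits of `J`-shaped diagrams and both `S` and `T`
preserve such limits.  If `D : J ⥤ S↓T` is a diagram all of whose objects have
invertible structure morphism (i.e. lie in the restricted comma category), then the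
limit of `D` exists, its structure morphism is an isomorphism, and the restricted
comma category `(S↓T)_iso` admits limits of `J`-shaped diagrams. -/
theorem restrictedComma_limits
    {A B C : Type*} [Category A] [Category B] [Category C]
    (S : A ⥤ C) (T : B ⥤ C) (J : Type*) [SmallCategory J]
    [HasLimitsOfShape J A] [HasLimitsOfShape J B]
    [PreservesLimitsOfShape J S] [PreservesLimitsOfShape J T]
    (D : J ⥤ Comma S T) (hD : ∀ j : J, IsIso (D.obj j).hom) :
    HasLimit D ∧ IsIso (limit D).hom ∧
      HasLimitsOfShape J
        (CategoryTheory.ObjectProperty.FullSubcategory (fun X : Comma S T => IsIso X.hom)) :=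
  ⟨inferInstance, Comma.isIso_hom_of_isLimit hD (limit.isLimit D),
    hasLimitsOfShape_of_closedUnderLimits J _⟩
end

section
/- Let Z be a metric space, let A, B ⊆ Z with A ∪ B = Z and A ∩ B = {p}, and suppose d(a, b) = d(a, p) + d(p, b) for all a ∈ A and b ∈ B. Let σ ⊆ Z satisfy diam(σ) ≤ r, and suppose σ is contained in neither A nor B. Then diam(σ ∪ {p}) ≤ r. -/
/-- Let `Z` be a metric space which is the metric wedge of subsets `A` and `B` at a
point `p` (`A ∪ B = Z`, `A ∩ B = {p}`, and `d(a,b) = d(a,p) + d(p,b)` for `a ∈ A`,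
`b ∈ B`).  If `σ ⊆ Z` has diameter at most `r` and is contained in neither `A` nor
`B`, then `σ ∪ {p}` also has diameter at most `r`. -/
theorem diam_union_wedge_point_le
    {Z : Type*} [MetricSpace Z] (A B : Set Z) (p : Z)
    (hcover : A ∪ B = Set.univ) (hinter : A ∩ B = {p})
    (hd : ∀ a ∈ A, ∀ b ∈ B, dist a b = dist a p + dist p b)
    (σ : Set Z) (r : ℝ) (hσ : Metric.diam σ ≤ r)
    (hA : ¬ σ ⊆ A) (hB : ¬ σ ⊆ B) :
    Metric.diam (σ ∪ {p}) ≤ r := by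
  obtain ⟨a, haσ, haA⟩ := Set.not_subset.1 hA
  obtain ⟨b, hbσ, hbB⟩ := Set.not_subset.1 hB
  have haB : a ∈ B := by
    have h : a ∈ A ∪ B := by rw [hcover]; exact Set.mem_univ a
    exact h.resolve_left haA
  have hbA : b ∈ A := by
    have h : b ∈ A ∪ B := by rw [hcover]; exact Set.mem_univ b
    exact h.resolve_right hbB
  have hr : 0 ≤ r := le_trans Metric.diam_nonneg hσ
  by_cases hbd : Bornology.IsBounded σ
  · have key : ∀ x ∈ σ, dist x p ≤ r := by
      intro x hx
      have hxU : x ∈ A ∪ B := by rw [hcover]; exact Set.mem_univ x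
      cases hxU with
      | inl hxA =>
        have h1 : dist x a = dist x p + dist p a := hd x hxA a haB
        have h2 : dist x a ≤ r := le_trans (Metric.dist_le_diam_of_mem hbd hx haσ) hσ
        nlinarith [dist_nonneg (x := p) (y := a)]
      | inr hxB =>
        have h1 : dist b x = dist b p + dist p x := hd b hbA x hxB
        have h2 : dist b x ≤ r := le_trans (Metric.dist_le_diam_of_mem hbd hbσ hx) hσ
        have := dist_nonneg (x := b) (y := p)
        rw [dist_comm x p]
        linarith
    apply Metric.diam_le_of_forall_dist_le hr
    rintro x (hx | hx) y (hy | hy)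
    · exact le_trans (Metric.dist_le_diam_of_mem hbd hx hy) hσ
    · rw [Set.mem_singleton_iff] at hy; subst hy; exact key x hx
    · rw [Set.mem_singleton_iff] at hx; subst hx
      rw [dist_comm]; exact key y hy
    · rw [Set.mem_singleton_iff] at hx hy; subst hx; subst hy; simpa using hr
  · have : ¬ Bornology.IsBounded (σ ∪ {p}) := fun h =>
      hbd (h.subset Set.subset_union_left)
    rw [Metric.diam_eq_zero_of_unbounded this]
    exact hr
end

section
/- Let Z be a metric space, let A, B ⊆ Z with A ∪ B = Z and A ∩ B = {p}, and suppose d(a, b) = d(a, p) + d(p, b) for all a ∈ A and b ∈ B. Let σ ⊆ Z be a set contained in neither A nor B, and suppose there exists a point w ∈ Z with d(z, w) ≤ r for all z ∈ σ. Then d(p, w) ≤ r as well; in particular every point of σ ∪ {p} is within distance r of w. -/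
/-- Let `Z` be a metric space which is the metric wedge of subsets `A` and `B` at a
point `p` (`A ∪ B = Z`, `A ∩ B = {p}`, and `d(a,b) = d(a,p) + d(p,b)` for `a ∈ A`,
`b ∈ B`).  Let `σ ⊆ Z` be contained in neither `A` nor `B`, and suppose there is a
point `w` with `d(z, w) ≤ r` for all `z ∈ σ`.  Then `d(p, w) ≤ r` as well; in
particular every point of `σ ∪ {p}` is within distance `r` of `w`. -/
theorem wedge_point_close_to_common_witness
    {Z : Type*} [MetricSpace Z] (A B : Set Z) (p : Z)
    (hcover : A ∪ B = Set.univ) (hinter : A ∩ B = {p})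
    (hd : ∀ a ∈ A, ∀ b ∈ B, dist a b = dist a p + dist p b)
    (σ : Set Z) (hA : ¬ σ ⊆ A) (hB : ¬ σ ⊆ B)
    (r : ℝ) (w : Z) (hw : ∀ z ∈ σ, dist z w ≤ r) :
    dist p w ≤ r ∧ ∀ z ∈ σ ∪ {p}, dist z w ≤ r := by
  obtain ⟨a, haσ, haA⟩ := Set.not_subset.mp hA
  obtain ⟨b, hbσ, hbB⟩ := Set.not_subset.mp hB
  have haB : a ∈ B := by
    have := Set.mem_univ a; rw [← hcover] at this; rcases this with h | h <;> tauto
  have hbA : b ∈ A := by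
    have := Set.mem_univ b; rw [← hcover] at this; rcases this with h | h <;> tauto
  have hwZ : w ∈ A ∪ B := by rw [hcover]; exact Set.mem_univ w
  have hpw : dist p w ≤ r := by
    rcases hwZ with hwA | hwB
    · have h := hd w hwA a haB
      have h2 : dist w p + dist p a ≤ r := by
        rw [← h, dist_comm]; exact hw a haσ
      have := dist_nonneg (x := p) (y := a)
      rw [dist_comm]
      linarith
    · have h := hd b hbA w hwB
      have h2 : dist b p + dist p w ≤ r := by rw [← h]; exact hw b hbσ
      have := dist_nonneg (x := b) (y := p)
      linarith
  refine ⟨hpw, fun z hz => ?_⟩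
  rcases hz with hz | hz
  · exact hw z hz
  · rw [Set.mem_singleton_iff.mp hz]; exact hpw
end

section
/- Let X be a measurable space in which all singletons are measurable. Let μ = Σ_{i ∈ s} a_i • δ_{x_i} and ν = Σ_{j ∈ t} b_j • δ_{y_j} be finite weighted sums of Dirac measures on X (with s, t finite index sets and weights a_i, b_j in [0, ∞]). Then ν is absolutely continuous with respect to μ if and only if every point y_j whose weight b_j is nonzero belongs to the set {x_i : i ∈ s, a_i ≠ 0}; that is, ν ≪ μ if and only if the support of ν is contained in the support of μ. -/
open MeasureTheory
open scoped ENNReal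

namespace MeasureTheory.Measure

theorem finset_sum_smul_dirac_apply_eq_zero_iff {X ι : Type*} [MeasurableSpace X]
    (s : Finset ι) (a : ι → ℝ≥0∞) (x : ι → X) {E : Set X} (hE : MeasurableSet E) :
    (∑ i ∈ s, a i • dirac (x i)) E = 0 ↔ ∀ i ∈ s, a i ≠ 0 → x i ∉ E := by
  simp only [finsetSum_apply, Finset.sum_eq_zero_iff, smul_apply, dirac_apply' _ hE,
    smul_eq_mul, mul_eq_zero, Set.indicator_apply_eq_zero, Pi.one_apply, one_ne_zero,
    imp_false]
  exact forall₂_congr fun _ _ ↦ or_iff_not_imp_left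

end MeasureTheory.Measure

open Measure in
/-- Let `X` be a measurable space in which singletons are measurable, and let
`μ = Σ_{i ∈ s} a i • δ_{x i}` and `ν = Σ_{j ∈ t} b j • δ_{y j}` be finite weighted
sums of Dirac measures.  Then `ν ≪ μ` (absolute continuity) holds if and only if
every point `y j` with nonzero weight `b j` belongs to
`{x i : i ∈ s, a i ≠ 0}`, i.e. the support of `ν` is contained in the support of
`μ`. -/
theorem finite_dirac_sum_absolutelyContinuous_iff_support_subset
    {X : Type*} [MeasurableSpace X] (hsing : ∀ x : X, MeasurableSet ({x} : Set X))
    {ι κ : Type*} (s : Finset ι) (t : Finset κ)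
    (a : ι → ℝ≥0∞) (b : κ → ℝ≥0∞) (x : ι → X) (y : κ → X) :
    (∑ j ∈ t, b j • Measure.dirac (y j)) ≪ (∑ i ∈ s, a i • Measure.dirac (x i)) ↔
      ∀ j ∈ t, b j ≠ 0 → ∃ i ∈ s, a i ≠ 0 ∧ x i = y j := by
  constructor
  · intro hac j hj hbj
    by_contra! hsupp
    have hμ : (∑ i ∈ s, a i • dirac (x i)) {y j} = 0 :=
      (finset_sum_smul_dirac_apply_eq_zero_iff s a x (hsing (y j))).2 hsupp
    exact (finset_sum_smul_dirac_apply_eq_zero_iff t b y (hsing (y j))).1 (hac hμ) j hj hbj rfl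
  · intro hsupp
    refine AbsolutelyContinuous.mk fun E hE hμ ↦ ?_
    rw [finset_sum_smul_dirac_apply_eq_zero_iff _ _ _ hE] at hμ ⊢
    intro j hj hbj
    obtain ⟨i, hi, hai, hxy⟩ := hsupp j hj hbj
    exact hxy ▸ hμ i hi hai
end
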